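/- arXiv:2110.02287 — 4 statements merged into one kernel-verified Lean document; each statement's English description precedes it below -/
import Mathlib

section
/- Let N ∈ ℕ and 0 < p < 1, and define w(x) = binom(N,x) p^x (1-p)^{N-x} and h(n) = ((-1)^n n!/(-N)_n) ((1-p)/p)^n. Then the (N+1)×(N+1) matrix B with entries B_{n,x} = sqrt(w(x))/sqrt(h(n)) · K_n(x;p,N) is orthogonal, i.e. B Bᵀ = I. -/
open Finset Polynomial

/-- Krawtchouk polynomial `K_n(x;p,N) = ∑_k ((-n)_k (-x)_k)/(k! (-N)_k) p^{-k}`. -/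
noncomputable def kraw (N n x : ℕ) (p : ℝ) : ℝ :=
  ∑ k ∈ Finset.range (min n x + 1),
    ((ascPochhammer ℝ k).eval (-(n : ℝ)) * (ascPochhammer ℝ k).eval (-(x : ℝ))) /
      ((k.factorial : ℝ) * (ascPochhammer ℝ k).eval (-(N : ℝ))) * p⁻¹ ^ k

/-- Weight `w(x;p,N) = binom(N,x) p^x (1-p)^{N-x}` of the Krawtchouk polynomials. -/
noncomputable def krawW (N x : ℕ) (p : ℝ) : ℝ := (N.choose x : ℝ) * p ^ x * (1 - p) ^ (N - x)

/-- Squared norm `h(n;p,N) = ((-1)^n n!/(-N)_n) ((1-p)/p)^n` of the Krawtchouk polynomials. -/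
noncomputable def krawH (N n : ℕ) (p : ℝ) : ℝ :=
  ((-1 : ℝ) ^ n * (n.factorial : ℝ) / (ascPochhammer ℝ n).eval (-(N : ℝ))) * ((1 - p) / p) ^ n

/-- The matrix `B_{n,x} = sqrt(w(x))/sqrt(h(n)) · K_n(x;p,N)`. -/
noncomputable def krawB (N : ℕ) (p : ℝ) : Matrix (Fin (N + 1)) (Fin (N + 1)) ℝ :=
  Matrix.of fun n x => Real.sqrt (krawW N x p) / Real.sqrt (krawH N n p) * kraw N n x p

/-! The polynomials `G_x(t) = (1 - r t)^x (1 + t)^(N - x)` with `r = (1 - p)/p` generate the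
Krawtchouk polynomials: `G_x(t) = ∑_n binom(N,n) K_n(x) t^n`, because `1 - r t = (1 + t) - t/p`.
Since `p (1 - r s)(1 - r t) + (1 - p)(1 + s)(1 + t) = 1 + r s t`, the binomial theorem gives
`∑_x w(x) G_x(s) G_x(t) = (1 + r s t)^N`, and comparing the coefficients of `s^m t^n` yields
`∑_x w(x) K_m(x) K_n(x) = δ_{mn} r^n / binom(N,n) = δ_{mn} h(n)`. Rescaling by `√w` and `√h`
turns this into `B Bᵀ = 1`. -/

theorem ascPochhammer_eval_neg_natCast {R : Type*} [Ring R] (a k : ℕ) :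
    (ascPochhammer R k).eval (-(a : R)) = (-1) ^ k * (k.factorial * a.choose k : ℕ) := by
  rw [ascPochhammer_eval_neg_eq_descPochhammer, descPochhammer_eval_eq_descFactorial,
    Nat.descFactorial_eq_factorial_mul_choose]

theorem choose_mul_choose_div_choose {n N : ℕ} (hn : n ≤ N) (k : ℕ) :
    (N.choose n * (n.choose k / N.choose k) : ℝ) =
      if k ≤ n then ((N - k).choose (n - k) : ℝ) else 0 := by
  split_ifs with hk
  · have hNk : (N.choose k : ℝ) ≠ 0 := by
      exact_mod_cast (Nat.choose_pos (hk.trans hn)).ne'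
    rw [← mul_div_assoc, div_eq_iff hNk]
    exact_mod_cast (Nat.choose_mul hk).trans (mul_comm _ _)
  · simp [Nat.choose_eq_zero_of_lt (not_le.mp hk)]

theorem coeff_one_add_C_mul_X_pow {R : Type*} [CommSemiring R] (c : R) (N k : ℕ) :
    ((1 + C c * X) ^ N).coeff k = N.choose k * c ^ k := by
  rw [add_comm, add_pow]
  simp only [mul_pow, one_pow, mul_one, finsetSum_coeff, coeff_mul_natCast, ← C_pow, coeff_C_mul,
    coeff_X_pow, mul_ite, mul_zero, ite_mul, zero_mul, sum_ite_eq, mem_range]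
  split_ifs with hk
  · ring
  · simp [Nat.choose_eq_zero_of_lt (not_lt.mp hk)]

theorem coeff_coeff_map_C_mul_C {R : Type*} [Semiring R] (f g : R[X]) (m n : ℕ) :
    ((f.map C * C g).coeff m).coeff n = f.coeff m * g.coeff n := by
  rw [coeff_mul_C, coeff_map, coeff_C_mul]

theorem Matrix.mul_transpose_eq_one_of_weighted_orthogonal {ι κ : Type*} [Fintype κ]
    [DecidableEq ι] {w : κ → ℝ} {h : ι → ℝ} {K : ι → κ → ℝ} (hw : ∀ x, 0 ≤ w x)
    (hh : ∀ n, 0 < h n) (horth : ∀ m n, ∑ x, w x * (K m x * K n x) = if m = n then h n else 0) :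
    Matrix.of (fun n x => √(w x) / √(h n) * K n x) *
      (Matrix.of fun n x => √(w x) / √(h n) * K n x).transpose = 1 := by
  ext m n
  have hterm : ∀ x, √(w x) / √(h m) * K m x * (√(w x) / √(h n) * K n x) =
      w x * (K m x * K n x) / (√(h m) * √(h n)) := fun x => by
    linear_combination K m x * K n x / (√(h m) * √(h n)) * Real.mul_self_sqrt (hw x)
  simp only [Matrix.mul_apply, Matrix.transpose_apply, Matrix.of_apply, hterm, ← sum_div,
    horth, Matrix.one_apply]
  rcases eq_or_ne m n with rfl | hmn
  · simp [Real.mul_self_sqrt (hh m).le, (hh m).ne']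
  · simp [hmn]

theorem krawtchouk_bilinear_generating_function {R : Type*} [CommRing R] (N : ℕ) {p r : R}
    (h : p * (1 + r) = 1) (s t : R) :
    ∑ x ∈ range (N + 1), N.choose x * p ^ x * (1 - p) ^ (N - x) *
        ((1 - r * s) ^ x * (1 + s) ^ (N - x)) * ((1 - r * t) ^ x * (1 + t) ^ (N - x)) =
      (1 + r * s * t) ^ N := by
  have hsum : p * (1 - r * s) * (1 - r * t) + (1 - p) * (1 + s) * (1 + t) = 1 + r * s * t := by
    linear_combination (r * s * t - s * t - s - t) * h
  rw [← hsum, add_pow]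
  refine sum_congr rfl fun x _ => ?_
  simp only [mul_pow]
  ring

theorem kraw_eq_sum_choose (N n x : ℕ) (p : ℝ) :
    kraw N n x p = ∑ k ∈ range (min n x + 1),
      (n.choose k * x.choose k / N.choose k : ℝ) * (-p⁻¹) ^ k := by
  refine sum_congr rfl fun k _ => ?_
  simp only [ascPochhammer_eval_neg_natCast, Nat.cast_mul, neg_pow p⁻¹]
  have hk : (k.factorial : ℝ) ≠ 0 := by positivity
  field_simp

theorem krawH_eq_div_choose {N n : ℕ} (hn : n ≤ N) (p : ℝ) :
    krawH N n p = ((1 - p) / p) ^ n / N.choose n := by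
  have hN : (N.choose n : ℝ) ≠ 0 := by exact_mod_cast (Nat.choose_pos hn).ne'
  rw [krawH, ascPochhammer_eval_neg_natCast]
  push_cast
  field_simp

theorem krawW_nonneg (N x : ℕ) {p : ℝ} (hp0 : 0 ≤ p) (hp1 : p ≤ 1) : 0 ≤ krawW N x p := by
  have : 0 ≤ 1 - p := sub_nonneg.mpr hp1
  unfold krawW
  positivity

theorem krawH_pos {N n : ℕ} (hn : n ≤ N) {p : ℝ} (hp0 : 0 < p) (hp1 : p < 1) :
    0 < krawH N n p := by
  have : 0 < 1 - p := sub_pos.mpr hp1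
  have : (0 : ℝ) < N.choose n := by exact_mod_cast Nat.choose_pos hn
  rw [krawH_eq_div_choose hn]
  positivity

noncomputable def krawGen {R : Type*} [CommRing R] (N x : ℕ) (r : R) : R[X] :=
  (1 - C r * X) ^ x * (1 + X) ^ (N - x)

theorem krawGen_eq_sum {N x : ℕ} (hx : x ≤ N) {p : ℝ} (hp : p ≠ 0) :
    krawGen N x ((1 - p) / p) =
      ∑ k ∈ range (x + 1), C (x.choose k * (-p⁻¹) ^ k) * (X ^ k * (1 + X) ^ (N - k)) := by
  have hsplit : (1 - C ((1 - p) / p) * X : ℝ[X]) = C (-p⁻¹) * X + (1 + X) := by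
    rw [sub_div, div_self hp, ← C_1]
    simp only [map_sub, map_neg, div_eq_mul_inv, one_mul, C_1]
    ring
  rw [krawGen, hsplit, add_pow, sum_mul]
  refine sum_congr rfl fun k hk => ?_
  have hkN : N - k = x - k + (N - x) := by
    have := mem_range_succ_iff.mp hk
    omega
  rw [hkN, pow_add, map_mul, map_pow, C_eq_natCast, mul_pow]
  ring

theorem coeff_krawGen {N n x : ℕ} (hn : n ≤ N) (hx : x ≤ N) {p : ℝ} (hp : p ≠ 0) :
    (krawGen N x ((1 - p) / p)).coeff n = N.choose n * kraw N n x p := by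
  have hext : ∑ k ∈ range (min n x + 1), (n.choose k * x.choose k / N.choose k : ℝ) * (-p⁻¹) ^ k
      = ∑ k ∈ range (x + 1), (n.choose k * x.choose k / N.choose k : ℝ) * (-p⁻¹) ^ k := by
    refine sum_subset (range_subset_range.mpr (by omega)) fun k hk hk' => ?_
    have : n < k := by simp only [mem_range] at hk hk'; omega
    simp [Nat.choose_eq_zero_of_lt this]
  rw [kraw_eq_sum_choose, hext, mul_sum, krawGen_eq_sum hx hp, finsetSum_coeff]
  refine sum_congr rfl fun k _ => ?_
  rw [coeff_C_mul, coeff_X_pow_mul', coeff_one_add_X_pow, ← choose_mul_choose_div_choose hn k]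
  ring

theorem sum_krawW_mul_coeff_krawGen_mul_coeff_krawGen (N m n : ℕ) {p : ℝ} (hp : p ≠ 0) :
    ∑ x ∈ range (N + 1), krawW N x p * ((krawGen N x ((1 - p) / p)).coeff m *
        (krawGen N x ((1 - p) / p)).coeff n) =
      if m = n then N.choose n * ((1 - p) / p) ^ n else 0 := by
  have h : p * (1 + (1 - p) / p) = 1 := by field_simp; ring
  set r := (1 - p) / p
  -- in `ℝ[X][X]`, `C X` and `X` are the two independent variables `s` and `t`
  have hpr : (C (C p) : ℝ[X][X]) * (1 + C (C r)) = 1 := by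
    simpa using congrArg (fun a : ℝ => (C (C a) : ℝ[X][X])) h
  have hgen : ∑ x ∈ range (N + 1),
      C (C (krawW N x p)) * ((krawGen N x r).map C * C (krawGen N x r)) =
        (1 + C (C r * X) * X) ^ N := by
    rw [map_mul C (C r) X, ← krawtchouk_bilinear_generating_function N hpr (C X) X]
    refine sum_congr rfl fun x _ => ?_
    simp only [krawW, krawGen, map_mul, map_natCast, map_pow, map_sub, map_add, map_one,
      Polynomial.map_mul, Polynomial.map_pow, Polynomial.map_sub, Polynomial.map_add,
      Polynomial.map_one, map_C, map_X]
    ring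
  have hcoeff := congrArg (fun f : ℝ[X][X] => (f.coeff m).coeff n) hgen
  simp only [finsetSum_coeff, coeff_C_mul, coeff_coeff_map_C_mul_C,
    coeff_one_add_C_mul_X_pow, mul_pow, ← C_pow, coeff_natCast_mul, coeff_X_pow] at hcoeff
  rw [hcoeff]
  rcases eq_or_ne m n with rfl | hmn
  · simp
  · simp [hmn, hmn.symm]

theorem sum_krawW_mul_kraw_mul_kraw {N m n : ℕ} (hm : m ≤ N) (hn : n ≤ N) {p : ℝ} (hp : p ≠ 0) :
    ∑ x ∈ range (N + 1), krawW N x p * (kraw N m x p * kraw N n x p) =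
      if m = n then krawH N n p else 0 := by
  have hcm : (N.choose m : ℝ) ≠ 0 := by exact_mod_cast (Nat.choose_pos hm).ne'
  have hcn : (N.choose n : ℝ) ≠ 0 := by exact_mod_cast (Nat.choose_pos hn).ne'
  have hgen := sum_krawW_mul_coeff_krawGen_mul_coeff_krawGen N m n hp
  rw [sum_congr rfl fun x hx => by
    rw [coeff_krawGen hm (mem_range_succ_iff.mp hx) hp,
      coeff_krawGen hn (mem_range_succ_iff.mp hx) hp]] at hgen
  have hfactor : ∑ x ∈ range (N + 1), krawW N x p *
      (N.choose m * kraw N m x p * (N.choose n * kraw N n x p)) =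
        N.choose m * N.choose n *
          ∑ x ∈ range (N + 1), krawW N x p * (kraw N m x p * kraw N n x p) := by
    rw [mul_sum]
    exact sum_congr rfl fun _ _ => by ring
  refine mul_left_cancel₀ (mul_ne_zero hcm hcn) ?_
  rw [← hfactor, hgen, krawH_eq_div_choose hn]
  rcases eq_or_ne m n with rfl | hmn
  · simp only [if_true]
    field_simp
  · simp [hmn]

/-- The matrix `B_{n,x} = sqrt(w(x))/sqrt(h(n)) · K_n(x;p,N)` is orthogonal: `B Bᵀ = I`. -/
theorem krawtchouk_matrix_orthogonal (N : ℕ) (p : ℝ) (hp0 : 0 < p) (hp1 : p < 1) :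
    krawB N p * (krawB N p).transpose = 1 := by
  refine Matrix.mul_transpose_eq_one_of_weighted_orthogonal
    (fun x => krawW_nonneg N x hp0.le hp1.le) (fun n => krawH_pos n.is_le hp0 hp1) fun m n => ?_
  rw [Fin.sum_univ_eq_sum_range (fun x => krawW N x p * (kraw N m x p * kraw N n x p)),
    sum_krawW_mul_kraw_mul_kraw m.is_le n.is_le hp0.ne']
  simp only [Fin.val_inj]
end

section
/- Let a ∈ ℕ, a ≥ 1, and let S(t₁,t₂) be an (a+1)×(a+1) matrix of real polynomials in (cos t₁, cos t₂) such that each entry S_{i,j} is homogeneous of degree 2a+2i+2j+c (for a fixed constant c) and no entry is the zero polynomial. If T is a complex (a+1)×(a+1) matrix with T·S(t₁,t₂) = S(t₁,t₂)·T for all t₁,t₂, then T is a scalar multiple of the identity. -/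
/-!
The values `(cos t₁, cos t₂)` fill the square `[-1, 1]²`, whose sides are infinite, so
`T S = S T` is an identity of matrices of complex polynomials. Its `(i, j)` entry is a sum of
homogeneous terms, and its component of degree `2a + c + 2k₀ + 2j` reads
`T i k₀ * P k₀ j = ∑_{i + k = k₀ + j} P i k * T k j`. For `j` the last index and `i < k₀`, and
for `j = 0` and `i > k₀`, the sum is empty and `P k₀ j ≠ 0` forces `T i k₀ = 0`; for `j = 0`
and `k₀ = i` only `k = 0` survives, which gives `T i i = T 0 0`.
-/

open Finset MvPolynomial

namespace MvPolynomial

variable {σ K ι : Type*} [CommRing K] [Fintype ι]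

theorem homogeneousComponent_C_mul_of_isHomogeneous {m : ℕ} {p : MvPolynomial σ K}
    (hp : p.IsHomogeneous m) (t : K) (n : ℕ) :
    homogeneousComponent n (C t * p) = if n = m then C t * p else 0 := by
  rw [homogeneousComponent_C_mul, homogeneousComponent_of_mem hp]
  split_ifs <;> simp

theorem C_mul_eq_sum_of_commute_graded [DecidableEq ι] {d : ℕ} {w : ι → ℕ}
    (hw : Function.Injective w)
    {Q : Matrix ι ι (MvPolynomial σ K)} (hQ : ∀ i j, (Q i j).IsHomogeneous (d + w i + w j))
    {T : Matrix ι ι K} (hT : T.map C * Q = Q * T.map C) (i j k₀ : ι) :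
    C (T i k₀) * Q k₀ j =
      ∑ k ∈ univ.filter (fun k => w i + w k = w k₀ + w j), C (T k j) * Q i k := by
  have hij := congrArg (homogeneousComponent (d + w k₀ + w j)) (congrFun (congrFun hT i) j)
  simp only [Matrix.mul_apply, Matrix.map_apply, map_sum] at hij
  simp_rw [mul_comm (Q i _), homogeneousComponent_C_mul_of_isHomogeneous (hQ _ _)] at hij
  have hcol (k : ι) : d + w k₀ + w j = d + w k + w j ↔ k₀ = k := by rw [← hw.eq_iff]; omega
  have hrow (k : ι) : d + w k₀ + w j = d + w i + w k ↔ w i + w k = w k₀ + w j := by omega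
  simpa only [hcol, hrow, sum_ite_eq, mem_univ, if_true, sum_filter] using hij

theorem exists_eq_smul_one_of_commute_graded [IsDomain K] [LinearOrder ι] [OrderBot ι]
    [OrderTop ι] {d : ℕ} {w : ι → ℕ} (hw : StrictMono w)
    {Q : Matrix ι ι (MvPolynomial σ K)} (hQ : ∀ i j, (Q i j).IsHomogeneous (d + w i + w j))
    (hQ0 : ∀ i j, Q i j ≠ 0) {T : Matrix ι ι K} (hT : T.map C * Q = Q * T.map C) :
    ∃ z : K, T = z • 1 := by
  have key := C_mul_eq_sum_of_commute_graded hw.injective hQ hT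
  have entry_eq_zero {i k : ι} (j : ι) (hnone : ∀ l, w i + w l ≠ w k + w j) : T i k = 0 := by
    have h := key i j k
    rw [filter_false_of_mem fun l _ => hnone l, sum_empty, mul_eq_zero, C_eq_zero] at h
    exact h.resolve_right (hQ0 k j)
  have off_diag {i k : ι} (hik : i ≠ k) : T i k = 0 := by
    rcases hik.lt_or_gt with h | h
    · refine entry_eq_zero ⊤ fun l => ?_
      have := hw h; have := hw.monotone (le_top : l ≤ ⊤); omega
    · refine entry_eq_zero ⊥ fun l => ?_
      have := hw h; have := hw.monotone (bot_le : ⊥ ≤ l); omega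
  have diag (i : ι) : T i i = T ⊥ ⊥ := by
    have h := key i ⊥ i
    simp only [add_right_inj, hw.injective.eq_iff, filter_eq', mem_univ, if_true,
      sum_singleton] at h
    exact C_injective σ K (mul_right_cancel₀ (hQ0 i ⊥) h)
  refine ⟨T ⊥ ⊥, Matrix.ext fun i k => ?_⟩
  rcases eq_or_ne i k with rfl | hik
  · simp [diag]
  · simp [off_diag hik, hik]

end MvPolynomial

theorem Complex.infinite_range_ofReal_cos :
    (Set.range fun t : ℝ => (Real.cos t : ℂ)).Infinite := by
  change (Set.range (Complex.ofReal ∘ Real.cos)).Infinite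
  rw [Set.range_comp, Real.range_cos]
  exact (Set.Icc_infinite (by norm_num)).image Complex.ofReal_injective.injOn

theorem commutant_trivial_general (a : ℕ) (c : ℕ)
    (S : ℝ → ℝ → Matrix (Fin (a + 1)) (Fin (a + 1)) ℝ)
    (P : Fin (a + 1) → Fin (a + 1) → MvPolynomial (Fin 2) ℝ)
    (hhom : ∀ i j, (P i j).IsHomogeneous (2 * a + 2 * (i : ℕ) + 2 * (j : ℕ) + c))
    (hne : ∀ i j, P i j ≠ 0)
    (hS : ∀ t₁ t₂ i j, S t₁ t₂ i j = MvPolynomial.eval ![Real.cos t₁, Real.cos t₂] (P i j))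
    (T : Matrix (Fin (a + 1)) (Fin (a + 1)) ℂ)
    (hT : ∀ t₁ t₂ : ℝ,
      T * (S t₁ t₂).map (Complex.ofReal) = (S t₁ t₂).map (Complex.ofReal) * T) :
    ∃ z : ℂ, T = z • 1 := by
  set Q : Matrix (Fin (a + 1)) (Fin (a + 1)) (MvPolynomial (Fin 2) ℂ) :=
    Matrix.of fun i j => map Complex.ofRealHom (P i j)
  have hQ (i j : Fin (a + 1)) :
      (Q i j).IsHomogeneous (2 * a + c + 2 * (i : ℕ) + 2 * (j : ℕ)) := by
    rw [show 2 * a + c + 2 * (i : ℕ) + 2 * (j : ℕ) = 2 * a + 2 * (i : ℕ) + 2 * (j : ℕ) + c by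
      ring]
    exact (hhom i j).map Complex.ofRealHom
  have hQ0 (i j : Fin (a + 1)) : Q i j ≠ 0 :=
    (map_injective _ Complex.ofReal_injective).ne_iff' (map_zero _) |>.mpr (hne i j)
  have hcomm : T.map C * Q = Q * T.map C := by
    refine Matrix.ext fun i j =>
      funext_set (fun _ => Set.range fun t : ℝ => (Real.cos t : ℂ))
        (fun _ => Complex.infinite_range_ofReal_cos) fun x hx => ?_
    choose t ht using fun i => hx i (Set.mem_univ i)
    have hx' : x = Complex.ofRealHom ∘ ![Real.cos (t 0), Real.cos (t 1)] :=
      funext fun i => by fin_cases i <;> simp [← ht]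
    have heval : (eval x).mapMatrix Q = (S (t 0) (t 1)).map Complex.ofReal := by
      ext k l
      simp [Q, hS, hx', ← eval₂_comp]
    have hTx : (eval x).mapMatrix (T.map C) = T := by
      ext; simp
    change (eval x).mapMatrix (T.map C * Q) i j = (eval x).mapMatrix (Q * T.map C) i j
    rw [map_mul, map_mul, hTx, heval, hT]
  exact exists_eq_smul_one_of_commute_graded (w := fun i : Fin (a + 1) => 2 * (i : ℕ))
    (fun i j h => by simpa using h) hQ hQ0 hcomm

/-- If the entries of a matrix-valued function `S(t₁,t₂)` are given by nonzero homogeneous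
polynomials in `(cos t₁, cos t₂)` of degree `2a+2i+2j+c`, then any complex matrix `T`
commuting with all `S(t₁,t₂)` is a scalar multiple of the identity. -/
theorem commutant_trivial (a : ℕ) (ha : 1 ≤ a) (c : ℕ)
    (S : ℝ → ℝ → Matrix (Fin (a + 1)) (Fin (a + 1)) ℝ)
    (P : Fin (a + 1) → Fin (a + 1) → MvPolynomial (Fin 2) ℝ)
    (hhom : ∀ i j, (P i j).IsHomogeneous (2 * a + 2 * (i : ℕ) + 2 * (j : ℕ) + c))
    (hne : ∀ i j, P i j ≠ 0)
    (hS : ∀ t₁ t₂ i j, S t₁ t₂ i j = MvPolynomial.eval ![Real.cos t₁, Real.cos t₂] (P i j))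
    (T : Matrix (Fin (a + 1)) (Fin (a + 1)) ℂ)
    (hT : ∀ t₁ t₂ : ℝ,
      T * (S t₁ t₂).map (Complex.ofReal) = (S t₁ t₂).map (Complex.ofReal) * T) :
    ∃ z : ℂ, T = z • 1 :=
  commutant_trivial_general a c S P hhom hne hS T hT
end

section
/- Define ψ₁(t₁,t₂) = cos²t₁ + cos²t₂ and consider the scalar radial Casimir operator R⁰(Ω) acting on smooth functions f(t₁,t₂) by R⁰(Ω)f = -½(∂²f/∂t₁² + ∂²f/∂t₂²) - (m-2)∑_{i=1,2} (cos tᵢ/sin tᵢ) ∂f/∂tᵢ - (cos(t₁+t₂)/sin(t₁+t₂))(∂f/∂t₁+∂f/∂t₂) - (cos(t₁-t₂)/sin(t₁-t₂))(∂f/∂t₁-∂f/∂t₂) - ∑_{i=1,2}(cos 2tᵢ/sin 2tᵢ) ∂f/∂tᵢ. Then R⁰(Ω)ψ₁ = (2m+4)ψ₁ - 8. -/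
open Real

/-- First partial derivative in the first variable. -/
noncomputable def pd1 (f : ℝ → ℝ → ℝ) (t₁ t₂ : ℝ) : ℝ := deriv (fun s => f s t₂) t₁

/-- First partial derivative in the second variable. -/
noncomputable def pd2 (f : ℝ → ℝ → ℝ) (t₁ t₂ : ℝ) : ℝ := deriv (fun s => f t₁ s) t₂

/-- The scalar radial part `R⁰(Ω)` of the Casimir operator for
`(SU(m+2), S(U(2)×U(m)))`. -/
noncomputable def R0 (m : ℕ) (f : ℝ → ℝ → ℝ) (t₁ t₂ : ℝ) : ℝ :=
  -(1 / 2) * (pd1 (pd1 f) t₁ t₂ + pd2 (pd2 f) t₁ t₂)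
  - ((m : ℝ) - 2) * ((Real.cos t₁ / Real.sin t₁) * pd1 f t₁ t₂
      + (Real.cos t₂ / Real.sin t₂) * pd2 f t₁ t₂)
  - (Real.cos (t₁ + t₂) / Real.sin (t₁ + t₂)) * (pd1 f t₁ t₂ + pd2 f t₁ t₂)
  - (Real.cos (t₁ - t₂) / Real.sin (t₁ - t₂)) * (pd1 f t₁ t₂ - pd2 f t₁ t₂)
  - (Real.cos (2 * t₁) / Real.sin (2 * t₁)) * pd1 f t₁ t₂
  - (Real.cos (2 * t₂) / Real.sin (2 * t₂)) * pd2 f t₁ t₂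

lemma deriv_cos_sq_add_const (c t : ℝ) :
    deriv (fun s => Real.cos s ^ 2 + c) t = -(2 * Real.sin t * Real.cos t) := by
  have h : HasDerivAt (fun s => Real.cos s ^ 2 + c)
      (2 * Real.cos t ^ 1 * -Real.sin t) t :=
    ((Real.hasDerivAt_cos t).pow 2).add_const c
  rw [h.deriv]; ring

lemma deriv_const_add_cos_sq (c t : ℝ) :
    deriv (fun s => c + Real.cos s ^ 2) t = -(2 * Real.sin t * Real.cos t) := by
  have h : HasDerivAt (fun s => c + Real.cos s ^ 2)
      (2 * Real.cos t ^ 1 * -Real.sin t) t :=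
    ((Real.hasDerivAt_cos t).pow 2).const_add c
  rw [h.deriv]; ring

lemma deriv_neg_two_sin_cos (t : ℝ) :
    deriv (fun s => -(2 * Real.sin s * Real.cos s)) t
      = -(2 * (Real.cos t ^ 2 - Real.sin t ^ 2)) := by
  have h : HasDerivAt (fun s => -(2 * Real.sin s * Real.cos s))
      (-((2 * Real.cos t) * Real.cos t + (2 * Real.sin t) * -Real.sin t)) t := by
    exact (((Real.hasDerivAt_sin t).const_mul 2).mul (Real.hasDerivAt_cos t)).neg
  rw [h.deriv]; ring

/-- `R⁰(Ω)ψ₁ = (2m+4)ψ₁ - 8` for `ψ₁ = cos²t₁ + cos²t₂`. -/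
theorem R0_psi1 (m : ℕ) (hm : 2 ≤ m) (t₁ t₂ : ℝ)
    (h1 : Real.sin t₁ ≠ 0) (h2 : Real.sin t₂ ≠ 0)
    (h3 : Real.sin (t₁ + t₂) ≠ 0) (h4 : Real.sin (t₁ - t₂) ≠ 0)
    (h5 : Real.sin (2 * t₁) ≠ 0) (h6 : Real.sin (2 * t₂) ≠ 0) :
    R0 m (fun s₁ s₂ => Real.cos s₁ ^ 2 + Real.cos s₂ ^ 2) t₁ t₂
      = (2 * (m : ℝ) + 4) * (Real.cos t₁ ^ 2 + Real.cos t₂ ^ 2) - 8 := by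
  set f : ℝ → ℝ → ℝ := fun s₁ s₂ => Real.cos s₁ ^ 2 + Real.cos s₂ ^ 2 with hf
  have hpd1 : pd1 f = fun a _ => -(2 * Real.sin a * Real.cos a) := by
    funext a b; simp only [pd1, hf, deriv_cos_sq_add_const]
  have hpd2 : pd2 f = fun _ b => -(2 * Real.sin b * Real.cos b) := by
    funext a b; simp only [pd2, hf, deriv_const_add_cos_sq]
  have hpd11 : pd1 (pd1 f) t₁ t₂ = -(2 * (Real.cos t₁ ^ 2 - Real.sin t₁ ^ 2)) := by
    rw [hpd1]; simp only [pd1, deriv_neg_two_sin_cos]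
  have hpd22 : pd2 (pd2 f) t₁ t₂ = -(2 * (Real.cos t₂ ^ 2 - Real.sin t₂ ^ 2)) := by
    rw [hpd2]; simp only [pd2, deriv_neg_two_sin_cos]
  rw [R0, hpd11, hpd22, hpd1, hpd2]
  -- key cot identities
  have key3 : Real.cos (t₁ + t₂) / Real.sin (t₁ + t₂) *
      (-(2 * Real.sin t₁ * Real.cos t₁) + -(2 * Real.sin t₂ * Real.cos t₂))
      = -2 * (Real.cos (t₁ + t₂) * Real.cos (t₁ - t₂)) := by
    have : -(2 * Real.sin t₁ * Real.cos t₁) + -(2 * Real.sin t₂ * Real.cos t₂)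
        = -2 * (Real.sin (t₁ + t₂) * Real.cos (t₁ - t₂)) := by
      rw [Real.sin_add, Real.cos_sub]
      linear_combination (2*Real.sin t₁*Real.cos t₁)*(Real.sin_sq_add_cos_sq t₂)
        + (2*Real.sin t₂*Real.cos t₂)*(Real.sin_sq_add_cos_sq t₁)
    rw [this]; field_simp
  have key4 : Real.cos (t₁ - t₂) / Real.sin (t₁ - t₂) *
      (-(2 * Real.sin t₁ * Real.cos t₁) - -(2 * Real.sin t₂ * Real.cos t₂))
      = -2 * (Real.cos (t₁ + t₂) * Real.cos (t₁ - t₂)) := by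
    have : -(2 * Real.sin t₁ * Real.cos t₁) - -(2 * Real.sin t₂ * Real.cos t₂)
        = -2 * (Real.sin (t₁ - t₂) * Real.cos (t₁ + t₂)) := by
      rw [Real.sin_sub, Real.cos_add]
      linear_combination (2*Real.sin t₁*Real.cos t₁)*(Real.sin_sq_add_cos_sq t₂)
        + (-2*Real.sin t₂*Real.cos t₂)*(Real.sin_sq_add_cos_sq t₁)
    rw [this]; field_simp
  have key5 : Real.cos (2 * t₁) / Real.sin (2 * t₁) * -(2 * Real.sin t₁ * Real.cos t₁)
      = -(Real.cos t₁ ^ 2 - Real.sin t₁ ^ 2) := by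
    rw [show -(2 * Real.sin t₁ * Real.cos t₁) = -Real.sin (2 * t₁) by
      rw [Real.sin_two_mul]]
    rw [Real.cos_two_mul']; field_simp
  have key6 : Real.cos (2 * t₂) / Real.sin (2 * t₂) * -(2 * Real.sin t₂ * Real.cos t₂)
      = -(Real.cos t₂ ^ 2 - Real.sin t₂ ^ 2) := by
    rw [show -(2 * Real.sin t₂ * Real.cos t₂) = -Real.sin (2 * t₂) by
      rw [Real.sin_two_mul]]
    rw [Real.cos_two_mul']; field_simp
  have key1 : Real.cos t₁ / Real.sin t₁ * -(2 * Real.sin t₁ * Real.cos t₁)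
      = -(2 * Real.cos t₁ ^ 2) := by field_simp
  have key2 : Real.cos t₂ / Real.sin t₂ * -(2 * Real.sin t₂ * Real.cos t₂)
      = -(2 * Real.cos t₂ ^ 2) := by field_simp
  have hcc : Real.cos (t₁ + t₂) * Real.cos (t₁ - t₂)
      = Real.cos t₁ ^ 2 + Real.cos t₂ ^ 2 - 1 := by
    rw [Real.cos_add, Real.cos_sub]
    have s1 := Real.sin_sq_add_cos_sq t₁
    have s2 := Real.sin_sq_add_cos_sq t₂
    nlinarith [s1, s2]
  rw [key1, key2, key3, key4, key5, key6, hcc]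
  have s1 := Real.sin_sq_add_cos_sq t₁
  have s2 := Real.sin_sq_add_cos_sq t₂
  ring_nf
  nlinarith [s1, s2]
end

section
/- Let c_i = 2i² + 2i(b+m) + C where C is a constant and b, m ≥ 0. Then the recursion d_r(c_i - c_r) = -d_{r+1}·2(r+1)(b+r+1) for 0 ≤ r < i, with normalization ∑_{r=0}^{i} d_r = 1, has the unique solution d_r = ((m+b+i)_i/(m)_i) · ((-i)_{i-r}(-i-b)_{i-r})/((i-r)!(1-m-2i-b)_{i-r}) for 0 ≤ r ≤ i (assuming m ≥ 2 so no denominator vanishes). -/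
/-!
Since `c_i - c_r = 2(i - r)(i + r + b + m)` does not vanish for `r < i`, the recursion determines
`d_r` from `d_{r+1}`: its solutions form a line, and the normalization picks one point on it.
The claimed `d_r` is `(m+b+i)_i / (m)_i` times the `(i-r)`-th term of
`₂F₁(-i, -i-b; 1-m-2i-b; 1)`. The ratio of consecutive terms gives the recursion, and the
Chu–Vandermonde identity
`₂F₁(-i, -i-b; 1-m-2i-b; 1) = (1-m-i)_i / (1-m-2i-b)_i = (m)_i / (m+b+i)_i` gives the
normalization.
-/

open Finset Polynomial

section Pochhammer
variable {R : Type*} [CommRing R]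

theorem descPochhammer_smeval_eq_eval (x : R) (n : ℕ) :
    (descPochhammer ℤ n).smeval x = (descPochhammer R n).eval x := by
  rw [descPochhammer_smeval_eq_ascPochhammer, ascPochhammer_smeval_eq_eval,
    descPochhammer_eval_eq_ascPochhammer]

theorem descPochhammer_eval_add (x y : R) (n : ℕ) :
    (descPochhammer R n).eval (x + y) = ∑ k ∈ range (n + 1),
      n.choose k * ((descPochhammer R k).eval x * (descPochhammer R (n - k)).eval y) := by
  simp only [← descPochhammer_smeval_eq_eval, Ring.descPochhammer_smeval_add n (Commute.all x y),
    Nat.sum_antidiagonal_eq_sum_range_succ_mk]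

theorem descPochhammer_eval_neg (x : R) (n : ℕ) :
    (descPochhammer R n).eval (-x) = (-1) ^ n * (ascPochhammer R n).eval x := by
  rw [← neg_neg x, ascPochhammer_eval_neg_eq_descPochhammer, neg_neg, ← mul_assoc, ← mul_pow,
    neg_one_mul, neg_neg, one_pow, one_mul]

theorem ascPochhammer_eval_mul_eval_add {k n : ℕ} (h : k ≤ n) (x : R) :
    (ascPochhammer R k).eval x * (ascPochhammer R (n - k)).eval (x + k) =
      (ascPochhammer R n).eval x := by
  simpa [Nat.add_sub_cancel' h] using congrArg (eval x) (ascPochhammer_mul (S := R) k (n - k))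

theorem ascPochhammer_eval_one_sub_sub (x : R) (n : ℕ) :
    (ascPochhammer R n).eval (1 - x - n) = (-1) ^ n * (ascPochhammer R n).eval x := by
  rw [show 1 - x - n = -(x + n - 1) by ring, ascPochhammer_eval_neg_eq_descPochhammer,
    descPochhammer_eval_eq_ascPochhammer, show x + n - 1 - n + 1 = x by ring]

theorem sum_neg_one_pow_mul_choose_mul_ascPochhammer_eval (n : ℕ) (β γ : R) :
    ∑ k ∈ range (n + 1), (-1) ^ k * n.choose k *
        ((ascPochhammer R k).eval β * (ascPochhammer R (n - k)).eval (γ + k)) =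
      (ascPochhammer R n).eval (γ - β) := by
  have h := descPochhammer_eval_add (-β) (γ + n - 1) n
  rw [descPochhammer_eval_eq_ascPochhammer, show -β + (γ + n - 1) - n + 1 = γ - β by ring] at h
  rw [h]
  refine sum_congr rfl fun k hk => ?_
  rw [descPochhammer_eval_neg, descPochhammer_eval_eq_ascPochhammer (r := γ + n - 1),
    Nat.cast_sub (Nat.lt_succ_iff.mp (mem_range.mp hk)),
    show γ + n - 1 - (n - k) + 1 = γ + k by ring]
  ring

end Pochhammer

section Hypergeometric
variable {K : Type*} [Field K]

theorem ordinaryHypergeometricCoefficient_succ (a b c : K) (k : ℕ) :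
    ordinaryHypergeometricCoefficient a b c (k + 1) =
      ordinaryHypergeometricCoefficient a b c k * ((a + k) * (b + k) / ((k + 1) * (c + k))) := by
  simp only [ordinaryHypergeometricCoefficient, ascPochhammer_succ_eval, Nat.factorial_succ,
    Nat.cast_mul, Nat.cast_succ, div_eq_mul_inv, mul_inv]
  ring

variable [CharZero K]

theorem ordinaryHypergeometricCoefficient_neg_nat_mul {n k : ℕ} (hk : k ≤ n) (β γ : K)
    (hγ : (ascPochhammer K n).eval γ ≠ 0) :
    ordinaryHypergeometricCoefficient (-(n : K)) β γ k * (ascPochhammer K n).eval γ =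
      (-1) ^ k * n.choose k *
        ((ascPochhammer K k).eval β * (ascPochhammer K (n - k)).eval (γ + k)) := by
  rw [← ascPochhammer_eval_mul_eval_add hk] at hγ ⊢
  have hγk := left_ne_zero_of_mul hγ
  have hk! : (k.factorial : K) ≠ 0 := by exact_mod_cast k.factorial_ne_zero
  rw [ordinaryHypergeometricCoefficient, ascPochhammer_eval_neg_eq_descPochhammer,
    descPochhammer_eval_eq_descFactorial, Nat.descFactorial_eq_factorial_mul_choose]
  field_simp
  push_cast
  ring

/-- The Chu–Vandermonde identity for `₂F₁(-n, β; γ; 1)`. -/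
theorem sum_ordinaryHypergeometricCoefficient_neg_nat (n : ℕ) (β γ : K)
    (hγ : (ascPochhammer K n).eval γ ≠ 0) :
    ∑ k ∈ range (n + 1), ordinaryHypergeometricCoefficient (-(n : K)) β γ k =
      (ascPochhammer K n).eval (γ - β) / (ascPochhammer K n).eval γ := by
  rw [eq_div_iff hγ, sum_mul, ← sum_neg_one_pow_mul_choose_mul_ascPochhammer_eval]
  exact sum_congr rfl fun k hk =>
    ordinaryHypergeometricCoefficient_neg_nat_mul (Nat.lt_succ_iff.mp (mem_range.mp hk)) β γ hγ

end Hypergeometric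

section BackwardRecurrence
variable {R : Type*} [CommSemiring R] [IsDomain R] {a β d e : ℕ → R} {i : ℕ}

theorem eq_of_backward_recurrence (ha : ∀ r < i, a r ≠ 0)
    (hd : ∀ r < i, d r * a r = d (r + 1) * β r) (he : ∀ r < i, e r * a r = e (r + 1) * β r)
    (hi : d i = e i) {r : ℕ} (hr : r ≤ i) : d r = e r := by
  induction hr using Nat.decreasingInduction with
  | self => exact hi
  | of_succ k hk ih => exact mul_right_cancel₀ (ha k hk) (by rw [hd k hk, he k hk, ih])

theorem eq_of_backward_recurrence_of_sum_eq (ha : ∀ r < i, a r ≠ 0)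
    (hd : ∀ r < i, d r * a r = d (r + 1) * β r) (he : ∀ r < i, e r * a r = e (r + 1) * β r)
    (hsum : ∑ r ∈ range (i + 1), d r = ∑ r ∈ range (i + 1), e r)
    (hsum_ne : ∑ r ∈ range (i + 1), e r ≠ 0) {r : ℕ} (hr : r ≤ i) : d r = e r := by
  have hprop : ∀ r ≤ i, e i * d r = d i * e r := fun r hr =>
    eq_of_backward_recurrence (d := fun r => e i * d r) (e := fun r => d i * e r) ha
      (fun r hr => by rw [mul_assoc, hd r hr, mul_assoc])
      (fun r hr => by rw [mul_assoc, he r hr, mul_assoc]) (mul_comm _ _) hr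
  have hi : d i = e i := by
    refine mul_right_cancel₀ hsum_ne ?_
    calc d i * ∑ r ∈ range (i + 1), e r = ∑ r ∈ range (i + 1), e i * d r := by
          rw [mul_sum]
          exact sum_congr rfl fun r hr => (hprop r (Nat.lt_succ_iff.mp (mem_range.mp hr))).symm
      _ = e i * ∑ r ∈ range (i + 1), e r := by rw [← mul_sum, hsum]
  exact eq_of_backward_recurrence ha hd he hi hr

end BackwardRecurrence

noncomputable def recursionSolution (b m i r : ℕ) : ℝ :=
  (ascPochhammer ℝ i).eval ((m : ℝ) + b + i) / (ascPochhammer ℝ i).eval (m : ℝ) *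
    ordinaryHypergeometricCoefficient (-(i : ℝ)) (-(i : ℝ) - b) (1 - (m : ℝ) - 2 * i - b) (i - r)

theorem recursionSolution_recurrence (b m : ℕ) {i r : ℕ} (hr : r < i) :
    recursionSolution b m i r * (2 * ((i : ℝ) - r) * (i + r + b + m)) =
      recursionSolution b m i (r + 1) * -(2 * ((r : ℝ) + 1) * (b + r + 1)) := by
  obtain ⟨j, rfl⟩ : ∃ j, i = r + 1 + j := ⟨i - (r + 1), by omega⟩
  rw [recursionSolution, recursionSolution, show r + 1 + j - r = j + 1 by omega,
    show r + 1 + j - (r + 1) = j by omega, ordinaryHypergeometricCoefficient_succ]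
  push_cast
  rw [show ((j : ℝ) + 1) * (1 - m - 2 * (r + 1 + j) - b + j) = -((j + 1) * (m + 2 * r + j + b + 1))
    by ring]
  field_simp
  ring

theorem sum_recursionSolution {m : ℕ} (hm : 0 < m) (b i : ℕ) :
    ∑ r ∈ range (i + 1), recursionSolution b m i r = 1 := by
  have hm_ne : (ascPochhammer ℝ i).eval (m : ℝ) ≠ 0 := (ascPochhammer_pos i _ (by positivity)).ne'
  have hmbi_ne : (ascPochhammer ℝ i).eval ((m : ℝ) + b + i) ≠ 0 :=
    (ascPochhammer_pos i _ (by positivity)).ne'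
  have hγ : (1 : ℝ) - m - 2 * i - b = 1 - ((m : ℝ) + b + i) - i := by ring
  have hγ_ne : (ascPochhammer ℝ i).eval (1 - (m : ℝ) - 2 * i - b) ≠ 0 := by
    rw [hγ, ascPochhammer_eval_one_sub_sub]
    exact mul_ne_zero (pow_ne_zero _ (by norm_num)) hmbi_ne
  have hreflect := sum_range_reflect
    (ordinaryHypergeometricCoefficient (-(i : ℝ)) (-(i : ℝ) - b) (1 - (m : ℝ) - 2 * i - b)) (i + 1)
  rw [add_tsub_cancel_right] at hreflect
  simp only [recursionSolution, ← mul_sum]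
  rw [hreflect, sum_ordinaryHypergeometricCoefficient_neg_nat _ _ _ hγ_ne,
    show (1 : ℝ) - m - 2 * i - b - (-i - b) = 1 - m - i by ring, hγ,
    ascPochhammer_eval_one_sub_sub, ascPochhammer_eval_one_sub_sub]
  field_simp

/-- The normalized solution of the recursion `d_r(c_i - c_r) = -2(r+1)(b+r+1) d_{r+1}` with
`c_n = 2n² + 2n(b+m) + C` and `∑_{r=0}^{i} d_r = 1` is
`d_r = ((m+b+i)_i/(m)_i) · ((-i)_{i-r}(-i-b)_{i-r})/((i-r)!(1-m-2i-b)_{i-r})`. -/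
theorem recursion_unique_solution (b m : ℕ) (hm : 2 ≤ m) (C : ℝ) (c : ℕ → ℝ)
    (hc : ∀ n : ℕ, c n = 2 * (n : ℝ) ^ 2 + 2 * (n : ℝ) * ((b : ℝ) + (m : ℝ)) + C)
    (i : ℕ) (d : ℕ → ℝ)
    (hrec : ∀ r < i, d r * (c i - c r) = -(d (r + 1)) * (2 * ((r : ℝ) + 1) * ((b : ℝ) + r + 1)))
    (hnorm : ∑ r ∈ Finset.range (i + 1), d r = 1) :
    ∀ r ≤ i, d r =
      ((ascPochhammer ℝ i).eval ((m : ℝ) + b + i) / (ascPochhammer ℝ i).eval (m : ℝ)) *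
        ((ascPochhammer ℝ (i - r)).eval (-(i : ℝ)) *
          (ascPochhammer ℝ (i - r)).eval (-(i : ℝ) - b)) /
        (((i - r).factorial : ℝ) *
          (ascPochhammer ℝ (i - r)).eval (1 - (m : ℝ) - 2 * i - b)) := by
  have hgap : ∀ r, c i - c r = 2 * ((i : ℝ) - r) * (i + r + b + m) := fun r => by
    rw [hc, hc]; ring
  have hgap_ne : ∀ r < i, c i - c r ≠ 0 := fun r hr => by
    have hri : (r : ℝ) < i := by exact_mod_cast hr
    rw [hgap]
    exact (mul_pos (mul_pos two_pos (sub_pos.mpr hri)) (by positivity)).ne'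
  have hsum := sum_recursionSolution (by omega : 0 < m) b i
  intro r hr
  rw [eq_of_backward_recurrence_of_sum_eq (e := recursionSolution b m i) hgap_ne
    (fun r hr => (hrec r hr).trans (neg_mul_comm _ _))
    (fun r hr => by rw [hgap]; exact recursionSolution_recurrence b m hr)
    (hnorm.trans hsum.symm) (hsum ▸ one_ne_zero) hr, recursionSolution]
  simp only [ordinaryHypergeometricCoefficient]
  ring
end
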